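/- arXiv:1312.4218 — 2 statements merged into one kernel-verified Lean document; each statement's English description precedes it below -/
import Mathlib

section
/- Let $M \ge 2$, let $1 \le k \le M/2$, and let $|\psi\rangle = \sum_{i=1}^{k} |2i-1\rangle \wedge |2i\rangle \in \wedge^2 \mathbb{C}^M$. Then the hyperplane $H = |\psi\rangle^{\perp} \subseteq \wedge^2 \mathbb{C}^M$ is spanned by decomposable 2-vectors; explicitly, $H$ is spanned by the vectors $|i\rangle \wedge |j\rangle$ for $i < j$ with $(i,j) \notin \{(1,2),(3,4),\dots,(2k-1,2k)\}$, together with the $k-1$ decomposable vectors $\left( \sum_{l=1}^{k} \omega^{j(l-1)} |2l-1\rangle \right) \wedge \left( \sum_{l=1}^{k} |2l\rangle \right)$ for $j = 1, \dots, k-1$, where $\omega = e^{2\pi i / k}$. -/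
open scoped InnerProductSpace

noncomputable section

/-- The `N`-fold tensor power of `ℂ^M`, realized as the Euclidean space with
orthonormal basis indexed by multi-indices `Fin N → Fin M`. -/
abbrev TensorPow (N M : ℕ) : Type := EuclideanSpace ℂ (Fin N → Fin M)

/-- The wedge (Slater determinant) of a family of `N` vectors in `ℂ^M`:
`|v 0⟩ ∧ ⋯ ∧ |v (N-1)⟩ = ∑ σ, sgn σ • |v σ(0), …, v σ(N-1)⟩`. -/
def wedge {N M : ℕ} (v : Fin N → EuclideanSpace ℂ (Fin M)) : TensorPow N M :=
  WithLp.toLp 2 (fun x => ∑ σ : Equiv.Perm (Fin N), ((Equiv.Perm.sign σ : ℤ) : ℂ) * ∏ k, v (σ k) (x k))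

/-- The exterior power `⋀^N ℂ^M`, i.e. the subspace of antisymmetric tensors
in `(ℂ^M)^{⊗N}`. -/
def exteriorPow (N M : ℕ) : Submodule ℂ (TensorPow N M) where
  carrier := {ψ | ∀ σ : Equiv.Perm (Fin N), ∀ x : Fin N → Fin M,
    ψ (x ∘ σ) = ((Equiv.Perm.sign σ : ℤ) : ℂ) * ψ x}
  add_mem' := by
    intro a b ha hb σ x
    have h1 := ha σ x
    have h2 := hb σ x
    show a (x ∘ σ) + b (x ∘ σ) = ((Equiv.Perm.sign σ : ℤ) : ℂ) * (a x + b x)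
    rw [h1, h2]; ring
  zero_mem' := by
    intro σ x
    show (0 : ℂ) = ((Equiv.Perm.sign σ : ℤ) : ℂ) * (0 : ℂ)
    ring
  smul_mem' := by
    intro c a ha σ x
    have h1 := ha σ x
    show c * a (x ∘ σ) = ((Equiv.Perm.sign σ : ℤ) : ℂ) * (c * a x)
    rw [h1]; ring

/-- A decomposable (Slater determinant) vector in `⋀^N ℂ^M`. -/
def IsSlater {N M : ℕ} (ψ : TensorPow N M) : Prop :=
  ∃ v : Fin N → EuclideanSpace ℂ (Fin M), ψ = wedge v

/-- The standard basis vector `|j+1⟩` of `ℂ^M` (0-based index `j`). -/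
def basisVec (M j : ℕ) : EuclideanSpace ℂ (Fin M) :=
  WithLp.toLp 2 (fun m => if (m : ℕ) = j then 1 else 0)

/-!
Every antisymmetric 2-tensor is a combination of the basis wedges `|i⟩ ∧ |j⟩`, and those with
`(i, j)` not one of the pairs `(2l-1, 2l)` are orthogonal to `ψ`. Subtracting them from a vector of
`H` leaves `∑ c_l |2l-1⟩ ∧ |2l⟩`, and orthogonality to `ψ` says `∑ c_l = 0`. Expanding the `j`-th
Fourier wedge gives `∑_l ω^{j(l-1)} |2l-1⟩ ∧ |2l⟩` plus off-pair basis wedges, and by discrete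
Fourier inversion the combinations of the `|2l-1⟩ ∧ |2l⟩` with zero coefficient sum are exactly the
span of the nontrivial modes `j = 1, …, k-1`.
-/

open Finset

namespace IsPrimitiveRoot

variable {K V : Type*} [Field K] [AddCommGroup V] [Module K V] {ζ : K} {k : ℕ}

theorem sum_range_pow_pow (hζ : IsPrimitiveRoot ζ k) (n : ℕ) :
    ∑ j ∈ range k, (ζ ^ n) ^ j = if k ∣ n then (k : K) else 0 := by
  split_ifs with hn
  · simp [(hζ.pow_eq_one_iff_dvd n).2 hn]
  · refine eq_zero_of_ne_zero_of_mul_left_eq_zero (x := 1 - ζ ^ n)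
      (sub_ne_zero_of_ne fun h => ?_) ?_
    · exact hn ((hζ.pow_eq_one_iff_dvd n).1 h.symm)
    · rw [mul_neg_geom_sum, ← pow_mul, pow_mul', hζ.pow_eq_one, one_pow, sub_self]

/-- Here `ζ ^ (k - i)` plays the role of `ζ⁻¹ ^ i`. -/
theorem sum_pow_smul_sum_pow_smul (hζ : IsPrimitiveRoot ζ k) (w : ℕ → V) {i : ℕ} (hi : i < k) :
    ∑ j ∈ range k, ζ ^ (j * (k - i)) • ∑ l ∈ range k, ζ ^ (j * l) • w l = (k : K) • w i := by
  have hdvd : ∀ l < k, k ∣ k - i + l ↔ l = i := fun l hl =>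
    ⟨fun h => by have := Nat.eq_of_dvd_of_lt_two_mul (by omega) h (by omega); omega,
      fun h => ⟨1, by omega⟩⟩
  have hcoeff : ∀ l ∈ range k, ∑ j ∈ range k, ζ ^ (j * (k - i)) * ζ ^ (j * l) =
      if l = i then (k : K) else 0 := fun l hl => by
    simp_rw [← pow_add, ← mul_add, mul_comm _ (k - i + l), pow_mul]
    simp only [hζ.sum_range_pow_pow, hdvd l (mem_range.1 hl)]
  simp_rw [smul_sum, smul_smul]
  rw [sum_comm]
  simp_rw [← sum_smul]
  rw [sum_congr rfl fun l hl => congrArg (· • w l) (hcoeff l hl)]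
  simp [hi]

theorem sum_smul_mem_span_fourier (hζ : IsPrimitiveRoot ζ k) (w : ℕ → V) (c : ℕ → K)
    (hc : ∑ l ∈ range k, c l = 0) :
    ∑ l ∈ range k, c l • w l ∈
      Submodule.span K {v | ∃ j, 1 ≤ j ∧ j < k ∧ v = ∑ l ∈ range k, ζ ^ (j * l) • w l} := by
  rcases Nat.eq_zero_or_pos k with rfl | hk
  · simp
  have := NeZero.of_pos hk
  have hk0 : (k : K) ≠ 0 := hζ.neZero'.out
  set D := fun j => ∑ l ∈ range k, ζ ^ (j * l) • w l
  have hinv : ∑ l ∈ range k, c l • w l =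
      (k : K)⁻¹ • ∑ j ∈ range k, (∑ i ∈ range k, c i * ζ ^ (j * (k - i))) • D j := calc
    _ = (k : K)⁻¹ • ∑ i ∈ range k, c i • ((k : K) • w i) := by
      rw [smul_sum]
      exact sum_congr rfl fun i _ => by rw [smul_comm (c i), inv_smul_smul₀ hk0]
    _ = (k : K)⁻¹ • ∑ i ∈ range k, c i • ∑ j ∈ range k, ζ ^ (j * (k - i)) • D j := by
      congr 1
      exact sum_congr rfl fun i hi => by rw [hζ.sum_pow_smul_sum_pow_smul w (mem_range.1 hi)]
    _ = _ := by
      congr 1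
      simp_rw [smul_sum, sum_smul, smul_smul]
      rw [sum_comm]
  rw [hinv]
  refine Submodule.smul_mem _ _ (Submodule.sum_mem _ fun j hj => ?_)
  rcases Nat.eq_zero_or_pos j with rfl | hj
  -- the trivial mode has coefficient `∑ c_i = 0`
  · simp [hc]
  · exact Submodule.smul_mem _ _ (Submodule.subset_span ⟨j, hj, mem_range.1 ‹_›, rfl⟩)

end IsPrimitiveRoot

section Wedge

variable {M : ℕ}

theorem wedge_two_apply (u w : EuclideanSpace ℂ (Fin M)) (x : Fin 2 → Fin M) :
    wedge ![u, w] x = u (x 0) * w (x 1) - w (x 0) * u (x 1) := by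
  have huniv : (univ : Finset (Equiv.Perm (Fin 2))) = {1, Equiv.swap 0 1} := by decide
  simp only [wedge]
  rw [huniv, sum_pair (by decide)]
  simp [Fin.prod_univ_two, sub_eq_add_neg]

theorem wedge_mem_exteriorPow {N : ℕ} (v : Fin N → EuclideanSpace ℂ (Fin M)) :
    wedge v ∈ exteriorPow N M := by
  intro σ x
  refine (Fintype.sum_equiv (Equiv.mulRight σ⁻¹) _ _ fun ρ => ?_).trans (mul_sum _ _ _).symm
  simp only [Equiv.coe_mulRight, Equiv.Perm.mul_apply, Function.comp_apply]
  rw [← Equiv.prod_comp σ (fun k => v (ρ (σ⁻¹ k)) (x k))]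
  simp only [Equiv.Perm.coe_inv, Equiv.symm_apply_apply, Equiv.Perm.sign_mul, Equiv.Perm.sign_inv]
  rcases Int.units_eq_one_or (Equiv.Perm.sign σ) with h | h <;> simp [h]

theorem wedge_two_swap (u w : EuclideanSpace ℂ (Fin M)) : wedge ![u, w] = -wedge ![w, u] := by
  ext x
  simp only [PiLp.neg_apply, wedge_two_apply]
  ring

def wedgeTwo : EuclideanSpace ℂ (Fin M) →ₗ[ℂ] EuclideanSpace ℂ (Fin M) →ₗ[ℂ] TensorPow 2 M :=
  LinearMap.mk₂ ℂ (fun u w => wedge ![u, w])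
    (fun _ _ _ => by ext; simp only [PiLp.add_apply, wedge_two_apply]; ring)
    (fun _ _ _ => by ext; simp only [PiLp.smul_apply, smul_eq_mul, wedge_two_apply]; ring)
    (fun _ _ _ => by ext; simp only [PiLp.add_apply, wedge_two_apply]; ring)
    (fun _ _ _ => by ext; simp only [PiLp.smul_apply, smul_eq_mul, wedge_two_apply]; ring)

theorem wedge_sum_smul_sum {ι κ : Type*} (s : Finset ι) (t : Finset κ) (a : ι → ℂ)
    (u : ι → EuclideanSpace ℂ (Fin M)) (v : κ → EuclideanSpace ℂ (Fin M)) :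
    wedge ![∑ i ∈ s, a i • u i, ∑ j ∈ t, v j] = ∑ i ∈ s, ∑ j ∈ t, a i • wedge ![u i, v j] := by
  change wedgeTwo _ _ = ∑ i ∈ s, ∑ j ∈ t, a i • wedgeTwo (u i) (v j)
  simp only [map_sum, map_smul, LinearMap.sum_apply, LinearMap.smul_apply]
  exact sum_comm

theorem wedge_basisVec_apply (a b : ℕ) (x : Fin 2 → Fin M) :
    wedge ![basisVec M a, basisVec M b] x =
      (if (x 0 : ℕ) = a ∧ (x 1 : ℕ) = b then 1 else 0) -
        (if (x 0 : ℕ) = b ∧ (x 1 : ℕ) = a then 1 else 0) := by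
  rw [wedge_two_apply]
  simp only [basisVec]
  split_ifs <;> simp_all

theorem inner_wedge_basisVec {a b : ℕ} (ha : a < M) (hb : b < M) (φ : TensorPow 2 M) :
    ⟪wedge ![basisVec M a, basisVec M b], φ⟫_ℂ =
      φ ![⟨a, ha⟩, ⟨b, hb⟩] - φ ![⟨b, hb⟩, ⟨a, ha⟩] := by
  have hx : ∀ (c d : ℕ) (hc : c < M) (hd : d < M) (x : Fin 2 → Fin M),
      ((x 0 : ℕ) = c ∧ (x 1 : ℕ) = d) ↔ ![⟨c, hc⟩, ⟨d, hd⟩] = x := fun c d hc hd x => by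
    rw [eq_comm, funext_iff, Fin.forall_fin_two]
    simp [Fin.ext_iff, eq_comm]
  simp only [PiLp.inner_apply, RCLike.inner_apply, wedge_basisVec_apply, hx a b ha hb,
    hx b a hb ha, map_sub, apply_ite (starRingEnd ℂ), map_one, map_zero, mul_sub, mul_ite,
    mul_one, mul_zero, sum_sub_distrib, sum_ite_eq, mem_univ, if_true]

end Wedge

section ExteriorPowTwo

variable {M : ℕ} {φ : TensorPow 2 M}

theorem apply_swap_of_mem_exteriorPow_two (hφ : φ ∈ exteriorPow 2 M) (a b : Fin M) :
    φ ![b, a] = -φ ![a, b] := by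
  have h := hφ (Equiv.swap 0 1) ![a, b]
  have hswap : ![a, b] ∘ Equiv.swap 0 1 = ![b, a] := by
    ext i; fin_cases i <;> rfl
  rw [hswap] at h
  simp [h]

theorem inner_wedge_basisVec_of_mem (hφ : φ ∈ exteriorPow 2 M) {a b : ℕ} (ha : a < M)
    (hb : b < M) :
    ⟪wedge ![basisVec M a, basisVec M b], φ⟫_ℂ = 2 * φ ![⟨a, ha⟩, ⟨b, hb⟩] := by
  rw [inner_wedge_basisVec ha hb, apply_swap_of_mem_exteriorPow_two hφ]
  ring

theorem eq_sum_wedge_basisVec (hφ : φ ∈ exteriorPow 2 M) :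
    φ = (2 : ℂ)⁻¹ • ∑ p : Fin M × Fin M,
      φ ![p.1, p.2] • wedge ![basisVec M p.1, basisVec M p.2] := by
  ext x
  have hx : x = ![x 0, x 1] := by ext i; fin_cases i <;> rfl
  simp only [PiLp.smul_apply, WithLp.ofLp_sum, Finset.sum_apply, wedge_basisVec_apply, smul_eq_mul,
    Fin.val_inj, mul_sub, mul_ite, mul_one, mul_zero, sum_sub_distrib, Fintype.sum_prod_type]
  simp only [ite_and, sum_ite_irrel, sum_const_zero, sum_ite_eq, mem_univ, if_true]
  rw [apply_swap_of_mem_exteriorPow_two hφ (x 0) (x 1), ← hx]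
  ring

theorem mem_of_inner_wedge_basisVec_ne_zero (hφ : φ ∈ exteriorPow 2 M)
    {T : Submodule ℂ (TensorPow 2 M)}
    (hT : ∀ a b : ℕ, a < b → b < M → ⟪wedge ![basisVec M a, basisVec M b], φ⟫_ℂ ≠ 0 →
      wedge ![basisVec M a, basisVec M b] ∈ T) : φ ∈ T := by
  have hne : ∀ a b : Fin M, φ ![a, b] ≠ 0 →
      ⟪wedge ![basisVec M a, basisVec M b], φ⟫_ℂ ≠ 0 := fun a b h => by
    simpa [inner_wedge_basisVec_of_mem hφ a.isLt b.isLt] using h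
  rw [eq_sum_wedge_basisVec hφ]
  refine T.smul_mem _ (T.sum_mem fun ⟨a, b⟩ _ => ?_)
  by_cases h0 : φ ![a, b] = 0
  · simp [h0]
  refine T.smul_mem _ ?_
  rcases lt_trichotomy a b with hab | rfl | hab
  · exact hT a b hab b.isLt (hne a b h0)
  · have := apply_swap_of_mem_exteriorPow_two hφ a a
    exact absurd (by linear_combination this / 2) h0
  · rw [wedge_two_swap]
    refine T.neg_mem (hT b a hab a.isLt (hne b a ?_))
    rwa [apply_swap_of_mem_exteriorPow_two hφ, neg_ne_zero]

end ExteriorPowTwo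

section Hyperplane

variable {M k : ℕ} {ζ : ℂ}

/-- The summand `|2l+1⟩ ∧ |2l+2⟩` of `ψ`. -/
def pairWedge (M l : ℕ) : TensorPow 2 M := wedge ![basisVec M (2 * l), basisVec M (2 * l + 1)]

def hyperplane (M k : ℕ) : Submodule ℂ (TensorPow 2 M) :=
  exteriorPow 2 M ⊓ (Submodule.span ℂ {∑ l ∈ range k, pairWedge M l})ᗮ

def offPairWedges (M k : ℕ) : Set (TensorPow 2 M) :=
  {φ | ∃ i j : ℕ, i < j ∧ j < M ∧ (∀ l < k, ¬(i = 2 * l ∧ j = 2 * l + 1)) ∧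
    φ = wedge ![basisVec M i, basisVec M j]}

def fourierWedges (M k : ℕ) (ζ : ℂ) : Set (TensorPow 2 M) :=
  {φ | ∃ j : ℕ, 1 ≤ j ∧ j < k ∧
    φ = wedge ![∑ l ∈ range k, ζ ^ (j * l) • basisVec M (2 * l),
      ∑ l ∈ range k, basisVec M (2 * l + 1)]}

theorem inner_pairWedge_sum_smul (hkM : 2 * k ≤ M) {l : ℕ} (hl : l < k) (a : ℕ → ℂ) :
    ⟪pairWedge M l, ∑ m ∈ range k, a m • pairWedge M m⟫_ℂ = 2 * a l := by
  have hpair : ∀ m, ⟪pairWedge M l, pairWedge M m⟫_ℂ = if m = l then 2 else 0 := fun m => by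
    unfold pairWedge
    rw [inner_wedge_basisVec_of_mem (wedge_mem_exteriorPow _) (by omega) (by omega),
      wedge_basisVec_apply]
    have : ¬(2 * l = 2 * m + 1 ∧ 2 * l + 1 = 2 * m) := by omega
    rcases eq_or_ne m l with rfl | hml
    · simp
    · simp [this, hml, hml.symm]
  simp [hpair, hl, mul_comm]

theorem inner_pairWedge_of_mem_offPairWedges {φ : TensorPow 2 M} (hφ : φ ∈ offPairWedges M k)
    {l : ℕ} (hl : l < k) (hlM : 2 * l + 1 < M) : ⟪pairWedge M l, φ⟫_ℂ = 0 := by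
  obtain ⟨i, j, hij, -, hpair, rfl⟩ := hφ
  rw [pairWedge, inner_wedge_basisVec_of_mem (wedge_mem_exteriorPow _) (by omega) hlM,
    wedge_basisVec_apply]
  have h₁ : ¬(2 * l = i ∧ 2 * l + 1 = j) := fun ⟨h, h'⟩ => hpair l hl ⟨h.symm, h'.symm⟩
  have h₂ : ¬(2 * l = j ∧ 2 * l + 1 = i) := by omega
  simp [h₁, h₂]

theorem span_offPairWedges_le_hyperplane (hkM : 2 * k ≤ M) :
    Submodule.span ℂ (offPairWedges M k) ≤ hyperplane M k := by
  refine Submodule.span_le.2 fun φ hφ => ⟨?_, ?_⟩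
  · obtain ⟨i, j, -, -, -, rfl⟩ := hφ
    exact wedge_mem_exteriorPow _
  · refine Submodule.mem_orthogonal_singleton_iff_inner_right.2 ?_
    rw [sum_inner]
    exact sum_eq_zero fun l hl =>
      inner_pairWedge_of_mem_offPairWedges hφ (mem_range.1 hl) (by have := mem_range.1 hl; omega)

theorem wedge_basisVec_mem_span_offPairWedges (hkM : 2 * k ≤ M) {l m : ℕ} (hl : l < k)
    (hm : m < k) (hlm : l ≠ m) :
    wedge ![basisVec M (2 * l), basisVec M (2 * m + 1)] ∈ Submodule.span ℂ (offPairWedges M k) := by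
  rcases Nat.lt_or_gt_of_ne hlm with h | h
  · exact Submodule.subset_span ⟨2 * l, 2 * m + 1, by omega, by omega, by omega, rfl⟩
  · rw [wedge_two_swap]
    exact Submodule.neg_mem _
      (Submodule.subset_span ⟨2 * m + 1, 2 * l, by omega, by omega, by omega, rfl⟩)

/-- Off the diagonal `l = m`, the expansion of the wedge consists of off-pair terms. -/
theorem wedge_sum_smul_sub_mem_span_offPairWedges (hkM : 2 * k ≤ M) (a : ℕ → ℂ) :
    wedge ![∑ l ∈ range k, a l • basisVec M (2 * l), ∑ m ∈ range k, basisVec M (2 * m + 1)] -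
      ∑ l ∈ range k, a l • pairWedge M l ∈ Submodule.span ℂ (offPairWedges M k) := by
  unfold pairWedge
  rw [wedge_sum_smul_sum, ← sum_sub_distrib]
  refine Submodule.sum_mem _ fun l hl => ?_
  rw [← add_sum_erase _ _ hl, add_sub_cancel_left]
  refine Submodule.sum_mem _ fun m hm => Submodule.smul_mem _ _ ?_
  obtain ⟨hml, hm⟩ := mem_erase.1 hm
  exact wedge_basisVec_mem_span_offPairWedges hkM (mem_range.1 hl) (mem_range.1 hm) (Ne.symm hml)

theorem span_le_hyperplane (hζ : IsPrimitiveRoot ζ k) (hkM : 2 * k ≤ M) :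
    Submodule.span ℂ (offPairWedges M k ∪ fourierWedges M k ζ) ≤ hyperplane M k := by
  have hoff := span_offPairWedges_le_hyperplane hkM
  refine Submodule.span_le.2 fun φ hφ => ?_
  rcases hφ with hφ | ⟨j, hj, hjk, rfl⟩
  · exact hoff (Submodule.subset_span hφ)
  set D := ∑ l ∈ range k, ζ ^ (j * l) • pairWedge M l
  have hD : ⟪∑ l ∈ range k, pairWedge M l, D⟫_ℂ = 0 := by
    have hdvd : ¬k ∣ j := fun h => by have := Nat.le_of_dvd hj h; omega
    rw [sum_inner, sum_congr rfl fun l hl => inner_pairWedge_sum_smul hkM (mem_range.1 hl) _,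
      ← mul_sum]
    simp_rw [pow_mul]
    rw [hζ.sum_range_pow_pow, if_neg hdvd, mul_zero]
  refine ⟨wedge_mem_exteriorPow _, ?_⟩
  rw [← sub_add_cancel (wedge _) D]
  refine Submodule.add_mem _ (hoff (wedge_sum_smul_sub_mem_span_offPairWedges hkM _)).2 ?_
  exact Submodule.mem_orthogonal_singleton_iff_inner_right.2 hD

theorem hyperplane_le_span (hζ : IsPrimitiveRoot ζ k) (hkM : 2 * k ≤ M) :
    hyperplane M k ≤ Submodule.span ℂ (offPairWedges M k ∪ fourierWedges M k ζ) := by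
  set S := Submodule.span ℂ (offPairWedges M k ∪ fourierWedges M k ζ)
  rintro ψ ⟨hext, horth⟩
  set c : ℕ → ℂ := fun l => ⟪pairWedge M l, ψ⟫_ℂ
  have hc : ∑ l ∈ range k, c l = 0 := by
    rw [← sum_inner]
    exact Submodule.mem_orthogonal_singleton_iff_inner_right.1 horth
  have hpair : ∑ l ∈ range k, c l • pairWedge M l ∈ S := by
    refine Submodule.span_le.2 ?_ (hζ.sum_smul_mem_span_fourier _ c hc)
    rintro _ ⟨j, hj, hjk, rfl⟩
    rw [← sub_sub_cancel (wedge _) (∑ l ∈ range k, ζ ^ (j * l) • pairWedge M l)]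
    exact S.sub_mem (Submodule.subset_span (Or.inr ⟨j, hj, hjk, rfl⟩))
      (Submodule.span_mono Set.subset_union_left
        (wedge_sum_smul_sub_mem_span_offPairWedges hkM _))
  -- `c l / 2` is the coefficient of `pairWedge M l` in `ψ`, so the remainder is off-pair
  have hrest : ψ - (2 : ℂ)⁻¹ • ∑ l ∈ range k, c l • pairWedge M l ∈ S := by
    refine mem_of_inner_wedge_basisVec_ne_zero (Submodule.sub_mem _ hext (Submodule.smul_mem _ _
      (Submodule.sum_mem _ fun l _ => Submodule.smul_mem _ _ (wedge_mem_exteriorPow _))))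
      fun a b hab hb hne => Submodule.subset_span (Or.inl ⟨a, b, hab, hb, ?_, rfl⟩)
    rintro l hl ⟨rfl, rfl⟩
    refine hne ?_
    change ⟪pairWedge M l, ψ - (2 : ℂ)⁻¹ • ∑ i ∈ range k, c i • pairWedge M i⟫_ℂ = 0
    rw [inner_sub_right, inner_smul_right, inner_pairWedge_sum_smul hkM hl]
    ring
  simpa using S.add_mem hrest (S.smul_mem (2 : ℂ)⁻¹ hpair)

end Hyperplane

theorem hyperplane_spanned_by_slaters_general (M k : ℕ) (hk : 1 ≤ k) (hkM : 2 * k ≤ M) :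
    Submodule.span ℂ
      ({φ : TensorPow 2 M | ∃ i j : ℕ, i < j ∧ j < M ∧
          (∀ l < k, ¬(i = 2 * l ∧ j = 2 * l + 1)) ∧
          φ = wedge ![basisVec M i, basisVec M j]} ∪
        {φ : TensorPow 2 M | ∃ j : ℕ, 1 ≤ j ∧ j < k ∧
          φ = wedge ![∑ l ∈ Finset.range k,
              (Complex.exp (2 * (Real.pi : ℂ) * Complex.I / (k : ℂ))) ^ (j * l) •
                basisVec M (2 * l),
            ∑ l ∈ Finset.range k, basisVec M (2 * l + 1)]}) =
      exteriorPow 2 M ⊓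
        (Submodule.span ℂ
          {∑ l ∈ Finset.range k, wedge ![basisVec M (2 * l), basisVec M (2 * l + 1)]})ᗮ := by
  have hζ := Complex.isPrimitiveRoot_exp k (by omega)
  exact le_antisymm (span_le_hyperplane hζ hkM) (hyperplane_le_span hζ hkM)

/-- For `ψ = ∑_{i=1}^k |2i-1⟩ ∧ |2i⟩`, the hyperplane `H = ψ^⊥ ⊆ ⋀² ℂ^M` is spanned
by the decomposable vectors `|i⟩ ∧ |j⟩` (`i < j`, `(i,j)` not of the form
`(2l-1, 2l)` with `l ≤ k`) together with the `k-1` decomposable vectors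
`(∑_l ω^{j(l-1)} |2l-1⟩) ∧ (∑_l |2l⟩)`, `j = 1, …, k-1`, where `ω = e^{2πi/k}`. -/
theorem hyperplane_spanned_by_slaters (M k : ℕ) (hM : 2 ≤ M) (hk : 1 ≤ k) (hkM : 2 * k ≤ M) :
    Submodule.span ℂ
      ({φ : TensorPow 2 M | ∃ i j : ℕ, i < j ∧ j < M ∧
          (∀ l < k, ¬(i = 2 * l ∧ j = 2 * l + 1)) ∧
          φ = wedge ![basisVec M i, basisVec M j]} ∪
        {φ : TensorPow 2 M | ∃ j : ℕ, 1 ≤ j ∧ j < k ∧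
          φ = wedge ![∑ l ∈ Finset.range k,
              (Complex.exp (2 * (Real.pi : ℂ) * Complex.I / (k : ℂ))) ^ (j * l) •
                basisVec M (2 * l),
            ∑ l ∈ Finset.range k, basisVec M (2 * l + 1)]}) =
      exteriorPow 2 M ⊓
        (Submodule.span ℂ
          {∑ l ∈ Finset.range k, wedge ![basisVec M (2 * l), basisVec M (2 * l + 1)]})ᗮ :=
  hyperplane_spanned_by_slaters_general M k hk hkM
end
end

section
/- There is no real fermionic unextendible product basis of five orthogonal decomposable states in $\wedge^2 \mathbb{C}^4$: for any five pairwise orthogonal nonzero decomposable 2-vectors $|\psi_i\rangle = |a_i\rangle \wedge |b_i\rangle$, $i = 1,\dots,5$, in $\wedge^2 \mathbb{C}^4$ in which all vectors $|a_i\rangle, |b_i\rangle$ have real entries, there exists a nonzero decomposable 2-vector with real entries orthogonal to all five. -/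
open scoped InnerProductSpace

noncomputable section

/-!
A real decomposable vector `A ∧ B` is recorded by its Plücker coordinates `p(A, B) ∈ ℝ⁶`, which
lie on the Klein quadric `Q = p₀₁p₂₃ - p₀₂p₁₃ + p₀₃p₁₂`, and
`⟪A ∧ B, V ∧ W⟫ = 2 ⟪p(A, B), p(V, W)⟫`. Five pairwise orthogonal nonzero points of the quadric,
normalized, extend to an orthonormal basis of `ℝ⁶` by one more vector `q`. The matrix of `Q` has
zero diagonal, so the sum of `Q` over any orthonormal basis (its trace) vanishes, whence `Q q = 0`.
Finally every real point `q` of the Klein quadric is decomposable: the rows of the skew matrix of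
`q` wedge to multiples of `q`.
-/

open scoped RealInnerProductSpace

lemma wedge_apply_eq_det {N M : ℕ} (v : Fin N → EuclideanSpace ℂ (Fin M)) (x : Fin N → Fin M) :
    wedge v x = (Matrix.of fun j k => v j (x k)).det := by
  simp [wedge, Matrix.det_apply']

lemma wedge_pair_apply {M : ℕ} (a b : EuclideanSpace ℂ (Fin M)) (x : Fin 2 → Fin M) :
    wedge ![a, b] x = a (x 0) * b (x 1) - a (x 1) * b (x 0) := by
  simp [wedge_apply_eq_det, Matrix.det_fin_two]

def realVec {ι : Type*} (A : ι → ℝ) : EuclideanSpace ℂ ι := WithLp.toLp 2 fun m => (A m : ℂ)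

lemma eq_realVec_re {ι : Type*} (v : EuclideanSpace ℂ ι) (hv : ∀ m, (v m).im = 0) :
    v = realVec fun m => (v m).re := by
  ext m
  exact Complex.ext rfl (by simp [realVec, hv m])

def pluckerCoords (A B : Fin 4 → ℝ) : EuclideanSpace ℝ (Fin 6) :=
  !₂[A 0 * B 1 - A 1 * B 0, A 0 * B 2 - A 2 * B 0, A 0 * B 3 - A 3 * B 0,
    A 1 * B 2 - A 2 * B 1, A 1 * B 3 - A 3 * B 1, A 2 * B 3 - A 3 * B 2]

lemma inner_wedge_realVec (A B V W : Fin 4 → ℝ) :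
    ⟪wedge ![realVec A, realVec B], wedge ![realVec V, realVec W]⟫_ℂ
      = ((2 * ⟪pluckerCoords A B, pluckerCoords V W⟫ : ℝ) : ℂ) := by
  rw [PiLp.inner_apply, ← (finTwoArrowEquiv (Fin 4)).symm.sum_comp, Fintype.sum_prod_type]
  simp only [finTwoArrowEquiv_symm_apply, wedge_pair_apply, realVec, Matrix.cons_val_zero,
    Matrix.cons_val_one, RCLike.inner_apply, Complex.conj_ofReal, conj_trivial, map_sub, map_mul,
    Fin.sum_univ_four, pluckerCoords, PiLp.inner_apply, Fin.sum_univ_six, Matrix.cons_val]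
  push_cast
  ring

lemma wedge_realVec_eq_zero_iff (A B : Fin 4 → ℝ) :
    wedge ![realVec A, realVec B] = 0 ↔ pluckerCoords A B = 0 := by
  rw [← inner_self_eq_zero (𝕜 := ℂ), ← inner_self_eq_zero (𝕜 := ℝ), inner_wedge_realVec]
  simp

def kleinQuadric (x : EuclideanSpace ℝ (Fin 6)) : ℝ := x 0 * x 5 - x 1 * x 4 + x 2 * x 3

lemma kleinQuadric_pluckerCoords (A B : Fin 4 → ℝ) : kleinQuadric (pluckerCoords A B) = 0 := by
  simp only [kleinQuadric, pluckerCoords, Matrix.cons_val]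
  ring

lemma kleinQuadric_smul (c : ℝ) (x : EuclideanSpace ℝ (Fin 6)) :
    kleinQuadric (c • x) = c ^ 2 * kleinQuadric x := by
  simp only [kleinQuadric, PiLp.smul_apply, smul_eq_mul]
  ring

lemma OrthonormalBasis.sum_apply_mul_apply {ι κ : Type*} [Fintype ι] [DecidableEq ι] [Fintype κ]
    (b : OrthonormalBasis κ ℝ (EuclideanSpace ℝ ι)) (m n : ι) :
    ∑ k, b k m * b k n = if m = n then 1 else 0 := by
  simpa [EuclideanSpace.inner_single_left, EuclideanSpace.inner_single_right, eq_comm]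
    using b.sum_inner_mul_inner (EuclideanSpace.single m 1) (EuclideanSpace.single n 1)

lemma kleinQuadric_sum_orthonormalBasis {κ : Type*} [Fintype κ]
    (b : OrthonormalBasis κ ℝ (EuclideanSpace ℝ (Fin 6))) : ∑ k, kleinQuadric (b k) = 0 := by
  simp [kleinQuadric, Finset.sum_add_distrib, Finset.sum_sub_distrib, b.sum_apply_mul_apply]

lemma orthonormal_normalize {ι E : Type*} [NormedAddCommGroup E] [InnerProductSpace ℝ E]
    {v : ι → E} (hv0 : ∀ i, v i ≠ 0) (hv : Pairwise fun i j => ⟪v i, v j⟫ = 0) :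
    Orthonormal ℝ fun i => NormedSpace.normalize (v i) := by
  refine ⟨fun i => NormedSpace.norm_normalize_eq_one_iff.mpr (hv0 i), fun i j hij => ?_⟩
  simp [NormedSpace.normalize, real_inner_smul_left, real_inner_smul_right, hv hij]

lemma exists_orthogonal_kleinQuadric_eq_zero (P : Fin 5 → EuclideanSpace ℝ (Fin 6))
    (hP0 : ∀ i, P i ≠ 0) (hP : Pairwise fun i j => ⟪P i, P j⟫ = 0)
    (hPQ : ∀ i, kleinQuadric (P i) = 0) :
    ∃ q, q ≠ 0 ∧ (∀ i, ⟪P i, q⟫ = 0) ∧ kleinQuadric q = 0 := by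
  have hN := orthonormal_normalize hP0 hP
  obtain ⟨b, hb⟩ := Orthonormal.exists_orthonormalBasis_extension_of_card_eq (𝕜 := ℝ)
    (ι := Option (Fin 5)) (v := fun k => k.elim 0 fun i => NormedSpace.normalize (P i))
    (s := Set.range some)
    (by simp) ⟨by rintro ⟨_, i, rfl⟩; exact hN.1 i,
      by rintro ⟨_, i, rfl⟩ ⟨_, j, rfl⟩ hij; exact hN.2 fun h => hij (h ▸ rfl)⟩
  have hbP (i : Fin 5) : b (some i) = NormedSpace.normalize (P i) := hb _ ⟨i, rfl⟩
  refine ⟨b none, b.orthonormal.ne_zero none, fun i => ?_, ?_⟩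
  · rw [← NormedSpace.norm_smul_normalize (P i), ← hbP, real_inner_smul_left,
      b.orthonormal.inner_eq_zero (Option.some_ne_none i), mul_zero]
  · have hsum := kleinQuadric_sum_orthonormalBasis b
    simpa [Fintype.sum_option, hbP, NormedSpace.normalize, kleinQuadric_smul, hPQ] using hsum

def pluckerSkew (q : EuclideanSpace ℝ (Fin 6)) : Matrix (Fin 4) (Fin 4) ℝ :=
  !![0, q 0, q 1, q 2; -q 0, 0, q 3, q 4; -q 1, -q 3, 0, q 5; -q 2, -q 4, -q 5, 0]

lemma pluckerCoords_pluckerSkew {q : EuclideanSpace ℝ (Fin 6)} (hq : kleinQuadric q = 0)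
    (i j : Fin 4) :
    pluckerCoords (pluckerSkew q i) (pluckerSkew q j) = pluckerSkew q i j • q := by
  unfold kleinQuadric at hq
  ext k
  fin_cases i <;> fin_cases j <;> fin_cases k <;>
    simp only [pluckerCoords, pluckerSkew, Fin.zero_eta, Fin.mk_one, Fin.reduceFinMk,
      Matrix.of_apply, Matrix.cons_val', Matrix.cons_val, Matrix.cons_val_fin_one, PiLp.smul_apply,
      smul_eq_mul] <;> first | ring1 | linear_combination hq | linear_combination -hq

lemma exists_pluckerCoords_eq_smul {q : EuclideanSpace ℝ (Fin 6)} (hq : kleinQuadric q = 0)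
    (hq0 : q ≠ 0) : ∃ A B : Fin 4 → ℝ, ∃ c : ℝ, c ≠ 0 ∧ pluckerCoords A B = c • q := by
  obtain ⟨i, j, hij⟩ : ∃ i j, pluckerSkew q i j ≠ 0 := by
    by_contra! h
    refine hq0 ?_
    ext k
    fin_cases k
    exacts [h 0 1, h 0 2, h 0 3, h 1 2, h 1 3, h 2 3]
  exact ⟨pluckerSkew q i, pluckerSkew q j, pluckerSkew q i j, hij, pluckerCoords_pluckerSkew hq i j⟩

/-- There is no real FUPB of five orthogonal decomposable states in `⋀² ℂ⁴`:
given five pairwise orthogonal nonzero decomposable 2-vectors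
`ψ i = a i ∧ b i` with all `a i`, `b i` having real entries, there exists a
nonzero decomposable 2-vector with real entries orthogonal to all five. -/
theorem no_real_FUPB_in_wedge2_C4
    (a b : Fin 5 → EuclideanSpace ℂ (Fin 4))
    (hreal : ∀ i, (∀ m, (a i m).im = 0) ∧ (∀ m, (b i m).im = 0))
    (hne : ∀ i, wedge ![a i, b i] ≠ 0)
    (horth : ∀ i j, i ≠ j → ⟪wedge ![a i, b i], wedge ![a j, b j]⟫_ℂ = 0) :
    ∃ v w : EuclideanSpace ℂ (Fin 4),
      (∀ m, (v m).im = 0) ∧ (∀ m, (w m).im = 0) ∧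
      wedge ![v, w] ≠ 0 ∧
      ∀ i, ⟪wedge ![a i, b i], wedge ![v, w]⟫_ℂ = 0 := by
  obtain ⟨A, rfl⟩ : ∃ A : Fin 5 → Fin 4 → ℝ, a = fun i => realVec (A i) :=
    ⟨_, funext fun i => eq_realVec_re _ (hreal i).1⟩
  obtain ⟨B, rfl⟩ : ∃ B : Fin 5 → Fin 4 → ℝ, b = fun i => realVec (B i) :=
    ⟨_, funext fun i => eq_realVec_re _ (hreal i).2⟩
  obtain ⟨q, hq0, hPq, hq⟩ := exists_orthogonal_kleinQuadric_eq_zero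
    (fun i => pluckerCoords (A i) (B i))
    (fun i => (wedge_realVec_eq_zero_iff _ _).not.mp (hne i))
    (fun i j hij => by simpa [inner_wedge_realVec] using horth i j hij)
    (fun i => kleinQuadric_pluckerCoords _ _)
  obtain ⟨V, W, c, hc, hVW⟩ := exists_pluckerCoords_eq_smul hq hq0
  refine ⟨realVec V, realVec W, fun _ => Complex.ofReal_im _, fun _ => Complex.ofReal_im _, ?_,
    fun i => ?_⟩
  · rw [Ne, wedge_realVec_eq_zero_iff, hVW]
    exact smul_ne_zero hc hq0
  · rw [inner_wedge_realVec, hVW, real_inner_smul_right, hPq i]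
    simp
end
end
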